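/- Let n ≥ 1, let α, β be partitions of n with m = l(β) and β_m = 1 (i.e., β has a part equal to 1). Then ζ^α_β = Σ_{i : α_i > α_{i+1}, 1 ≤ i ≤ l(α)} ζ^{α − ε_i}_{β − ε_m} (the branching theorem for symmetric group characters). -/

import Mathlib

open Finsupp
open scoped Classical

/-- The row index of `k` in the standard tabloid of shape `α`: the least `i` such that
`k < α 0 + ⋯ + α i`. -/
noncomputable def rowIdx (α : ℕ →₀ ℤ) (k : ℕ) : ℕ := sInf {i | (k : ℤ) < ∑ j ∈ Finset.range (i + 1), α j}

/-- The Young subgroup of `S_n` associated to `α`: the stabilizer of the standard tabloid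
whose rows are the consecutive blocks of `{0, …, n-1}` of sizes `α 0, α 1, …`. -/
def youngSubgroup (n : ℕ) (α : ℕ →₀ ℤ) : Subgroup (Equiv.Perm (Fin n)) where
  carrier := {σ | ∀ k : Fin n, rowIdx α (σ k) = rowIdx α k}
  one_mem' := fun _ => rfl
  mul_mem' := by
    intro a b ha hb k
    simpa [Equiv.Perm.mul_apply] using (ha (b k)).trans (hb k)
  inv_mem' := by
    intro a ha k
    have := ha (a⁻¹ k)
    rw [show a (a⁻¹ k) = k from by simp] at this
    exact this.symm

/-- The value at `g` of the permutation character of `G` acting on the cosets of `H`: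
the number of fixed cosets.  This is the value of the character induced from the
trivial character of `H`. -/
noncomputable def permCharValue {n : ℕ} (H : Subgroup (Equiv.Perm (Fin n)))
    (g : Equiv.Perm (Fin n)) : ℤ :=
  Nat.card {x : Equiv.Perm (Fin n) ⧸ H // g • x = x}

/-- `ξ^α`, as a function on `S_n`: the permutation character induced from the trivial
character of the Young subgroup `S_α` when `α` is nonnegative with `|α| = n`, and `0`
otherwise. -/
noncomputable def xi (n : ℕ) (α : ℕ →₀ ℤ) (g : Equiv.Perm (Fin n)) : ℤ :=
  if (∀ i, 0 ≤ α i) ∧ (α.sum fun _ v => v) = (n : ℤ) then permCharValue (youngSubgroup n α) g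
  else 0

/-- An `α`-tabloid: a sequence of pairwise disjoint subsets of `{0,…,n-1}` with
`|t i| = α i` for every `i`. -/
def IsTabloid (n : ℕ) (α : ℕ →₀ ℤ) (t : ℕ → Finset (Fin n)) : Prop :=
  (∀ i j, i ≠ j → Disjoint (t i) (t j)) ∧ ∀ i, ((t i).card : ℤ) = α i

/-- The multiset of (nonzero) parts of a finitely supported sequence. -/
def partsOf (β : ℕ →₀ ℕ) : Multiset ℕ := β.support.val.map β

/-- `σ` has cycle type `β` (with `1`s in `β` recording fixed points). -/
def HasCycleType {n : ℕ} (σ : Equiv.Perm (Fin n)) (β : ℕ →₀ ℕ) : Prop :=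
  (β.sum fun _ v => v) = n ∧ σ.cycleType = Multiset.filter (fun k => 2 ≤ k) (partsOf β)

/-- A nonnegative sequence regarded as an integer sequence. -/
noncomputable def natToZ (β : ℕ →₀ ℕ) : ℕ →₀ ℤ := Finsupp.mapRange Int.ofNat rfl β

/-- The virtual character `χ^α = ∑_{σ ∈ S_l} sgn σ · ξ^{α + σ - id_l}` (0-indexed,
the sequence `α + σ - id_l` has `i`-th entry `α i + σ i - i`). -/
noncomputable def chi (n l : ℕ) (α : ℕ →₀ ℤ) (g : Equiv.Perm (Fin n)) : ℤ :=
  ∑ σ : Equiv.Perm (Fin l),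
    (Equiv.Perm.sign σ : ℤ) *
      xi n (α + ∑ i : Fin l, Finsupp.single (i : ℕ) (((σ i : ℕ) : ℤ) - (i : ℕ))) g

/-- `ζ^α`, the irreducible character of `S_n` corresponding to the partition `α` of `n`,
given by the determinantal formula `ζ^α = χ^α` (with `l = n ≥ l(α)`). -/
noncomputable def zeta (n : ℕ) (α : ℕ →₀ ℕ) (g : Equiv.Perm (Fin n)) : ℤ :=
  chi n n (natToZ α) g

/-- `α` is a partition of `n`: weakly decreasing with `|α| = n`. -/
def IsPartitionOf (α : ℕ →₀ ℕ) (n : ℕ) : Prop :=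
  (∀ i, α (i + 1) ≤ α i) ∧ (α.sum fun _ v => v) = n

/-!
`ξ^γ(g)` counts the `γ`-tabloids fixed by `g`: the Young subgroup is the stabilizer of the
standard tabloid, whose orbit consists of all `γ`-tabloids. Since `s` has the cycle type of `τ`
plus one fixed point, we may replace `s` by `τ` extended to fix the last point; deleting that
point from the row `i` containing it turns the fixed `γ`-tabloids into the fixed
`(γ - ε_i)`-tabloids of `τ`, so `ξ^γ(s) = ∑ᵢ ξ^{γ - ε_i}(τ)`. Summing this over the determinantal
formula gives `ζ^α(s) = ∑ᵢ χ^{α - ε_i}(τ)`. If `α_i = α_{i+1}`, the rows `i` and `i + 1` of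
`α - ε_i + σ - id` are exchanged by `σ ↦ σ * (i i+1)`, which reverses the sign, so that term
vanishes; otherwise `α - ε_i` is a partition of `N` with `N`-th part `0`, and its determinant
over `S_{N+1}` reduces to the one over `S_N`, i.e. to `ζ^{α - ε_i}`.
-/

open scoped Pointwise

lemma MulAction.card_fixed_quotient_stabilizer {G α : Type*} [Group G] [MulAction G α]
    (x : α) (g : G) :
    Nat.card {q : G ⧸ stabilizer G x // g • q = q} =
      Nat.card {y : α // y ∈ orbit G x ∧ g • y = y} := by
  let e := (orbitEquivQuotientStabilizer G x).symm
  have he (q : G ⧸ stabilizer G x) : (e (g • q) : α) = g • (e q : α) := by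
    induction q using QuotientGroup.induction_on with | _ a =>
    change (e ((g * a : G) : G ⧸ stabilizer G x) : α) = _
    rw [orbitEquivQuotientStabilizer_symm_apply, orbitEquivQuotientStabilizer_symm_apply,
      mul_smul]
  refine Nat.card_congr ((e.subtypeEquiv fun q => ?_).trans
    (Equiv.subtypeSubtypeEquivSubtypeInter (· ∈ orbit G x) (fun y => g • y = y)))
  rw [← he, Subtype.val_injective.eq_iff, e.injective.eq_iff]

lemma Finset.sum_range_eq_of_eq_zero {M : Type*} [AddCommMonoid M] {f : ℕ → M} {a b : ℕ}
    (ha : ∀ i, a ≤ i → f i = 0) (hb : ∀ i, b ≤ i → f i = 0) :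
    ∑ i ∈ Finset.range a, f i = ∑ i ∈ Finset.range b, f i := by
  rcases le_total a b with h | h
  · exact Finset.sum_subset (Finset.range_subset_range.2 h) fun i _ hi =>
      ha i (by simpa using hi)
  · exact (Finset.sum_subset (Finset.range_subset_range.2 h) fun i _ hi =>
      hb i (by simpa using hi)).symm

namespace IsTabloid

variable {n : ℕ} {γ : ℕ →₀ ℤ} {t t' : ℕ → Finset (Fin n)}

lemma smul (ht : IsTabloid n γ t) (g : Equiv.Perm (Fin n)) : IsTabloid n γ (g • t) :=
  ⟨fun i j hij => (Finset.disjoint_image g.injective).2 (ht.1 i j hij),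
    fun i => (Finset.card_smul_finset g (t i)).symm ▸ ht.2 i⟩

lemma eq_empty_of_eq_zero (ht : IsTabloid n γ t) {j : ℕ} (hj : γ j = 0) : t j = ∅ :=
  Finset.card_eq_zero.1 (by exact_mod_cast (ht.2 j).trans hj)

lemma mem_iff_eq (ht : IsTabloid n γ t) {i j : ℕ} {k : Fin n} (hk : k ∈ t i) :
    k ∈ t j ↔ j = i :=
  ⟨fun hkj => by_contra fun hji => Finset.disjoint_left.1 (ht.1 j i hji) hkj hk,
    fun hji => hji ▸ hk⟩

lemma exists_mem (ht : IsTabloid n γ t) (hsum : (γ.sum fun _ v => v) = n) (k : Fin n) :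
    ∃ i ∈ γ.support, k ∈ t i := by
  have hcard : (γ.support.biUnion t).card = n := by
    rw [Finset.card_biUnion fun i _ j _ hij => ht.1 i j hij]
    exact_mod_cast (Finset.sum_congr rfl fun i _ => ht.2 i).trans hsum
  have hcover : γ.support.biUnion t = Finset.univ :=
    Finset.eq_univ_of_card _ (hcard.trans (Fintype.card_fin n).symm)
  exact Finset.mem_biUnion.1 (hcover ▸ Finset.mem_univ k)

noncomputable def sigmaEquiv (ht : IsTabloid n γ t) (hsum : (γ.sum fun _ v => v) = n) :
    (Σ i, t i) ≃ Fin n :=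
  Equiv.ofBijective (fun p => p.2.1) <| by
    refine ⟨fun p q hpq => Sigma.subtype_ext ?_ hpq, fun k => ?_⟩
    · by_contra hne
      have hq : (p.2 : Fin n) ∈ t q.1 := by simpa only [hpq] using q.2.2
      exact Finset.disjoint_left.1 (ht.1 _ _ hne) p.2.2 hq
    · obtain ⟨i, -, hk⟩ := ht.exists_mem hsum k
      exact ⟨⟨i, k, hk⟩, rfl⟩

lemma exists_smul_eq (ht : IsTabloid n γ t) (ht' : IsTabloid n γ t')
    (hsum : (γ.sum fun _ v => v) = n) : ∃ g : Equiv.Perm (Fin n), g • t = t' := by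
  have hcard (i : ℕ) : (t i).card = (t' i).card := by
    exact_mod_cast (ht.2 i).trans (ht'.2 i).symm
  let c (i : ℕ) : t i ≃ t' i := Finset.equivOfCardEq (hcard i)
  let g : Equiv.Perm (Fin n) :=
    (ht.sigmaEquiv hsum).symm.trans ((Equiv.sigmaCongrRight c).trans (ht'.sigmaEquiv hsum))
  refine ⟨g, funext fun i => Finset.eq_of_subset_of_card_le ?_ ?_⟩
  · intro y hy
    obtain ⟨x, hx, rfl⟩ := Finset.mem_smul_finset.1 hy
    have hsymm : (ht.sigmaEquiv hsum).symm x = ⟨i, x, hx⟩ :=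
      (Equiv.symm_apply_eq _).2 rfl
    show ((ht'.sigmaEquiv hsum) (Equiv.sigmaCongrRight c ((ht.sigmaEquiv hsum).symm x))) ∈ t' i
    rw [hsymm]
    exact (c i ⟨x, hx⟩).2
  · rw [Pi.smul_apply, Finset.card_smul_finset, hcard]

lemma orbit_eq (ht : IsTabloid n γ t) (hsum : (γ.sum fun _ v => v) = n) :
    MulAction.orbit (Equiv.Perm (Fin n)) t = {t' | IsTabloid n γ t'} := by
  ext t'
  refine ⟨?_, fun ht' => ht.exists_smul_eq ht' hsum⟩
  rintro ⟨g, rfl⟩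
  exact ht.smul g

end IsTabloid

def FixedTabloid (n : ℕ) (γ : ℕ →₀ ℤ) (g : Equiv.Perm (Fin n)) : Type :=
  {t : ℕ → Finset (Fin n) // IsTabloid n γ t ∧ g • t = t}

instance (n : ℕ) (γ : ℕ →₀ ℤ) (g : Equiv.Perm (Fin n)) : Finite (FixedTabloid n γ g) := by
  refine Finite.of_injective (fun t : FixedTabloid n γ g => fun j : γ.support => t.1 j) ?_
  intro t t' h
  refine Subtype.ext (funext fun j => ?_)
  by_cases hj : j ∈ γ.support
  · exact congrFun h ⟨j, hj⟩
  · rw [t.2.1.eq_empty_of_eq_zero (Finsupp.notMem_support_iff.1 hj),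
      t'.2.1.eq_empty_of_eq_zero (Finsupp.notMem_support_iff.1 hj)]

section StandardTabloid

variable {n : ℕ} {γ : ℕ →₀ ℤ}

noncomputable def stdTabloid (n : ℕ) (γ : ℕ →₀ ℤ) : ℕ → Finset (Fin n) :=
  fun i => Finset.univ.filter fun k => rowIdx γ k = i

lemma mem_stdTabloid {i : ℕ} {k : Fin n} : k ∈ stdTabloid n γ i ↔ rowIdx γ k = i := by
  simp [stdTabloid]

lemma youngSubgroup_eq_stabilizer :
    youngSubgroup n γ = MulAction.stabilizer (Equiv.Perm (Fin n)) (stdTabloid n γ) := by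
  ext σ
  rw [MulAction.mem_stabilizer_iff]
  constructor
  · intro hσ
    funext i
    ext k
    rw [Pi.smul_apply, ← Finset.inv_smul_mem_iff, mem_stdTabloid, mem_stdTabloid,
      Equiv.Perm.smul_def, (youngSubgroup n γ).inv_mem hσ k]
  · intro h k
    have hk : σ • k ∈ σ • stdTabloid n γ (rowIdx γ k) :=
      Finset.smul_mem_smul_finset_iff σ |>.2 (mem_stdTabloid.2 rfl)
    rwa [← Pi.smul_apply, h, mem_stdTabloid] at hk

def partialSum (γ : ℕ →₀ ℤ) (i : ℕ) : ℤ := ∑ j ∈ Finset.range i, γ j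

lemma partialSum_monotone (hpos : ∀ j, 0 ≤ γ j) : Monotone (partialSum γ) :=
  fun _ _ h => Finset.sum_le_sum_of_subset_of_nonneg (Finset.range_subset_range.2 h)
    fun j _ _ => hpos j

lemma partialSum_eq_sum {m : ℕ} (h : γ.support ⊆ Finset.range m) :
    partialSum γ m = γ.sum fun _ v => v :=
  (Finset.sum_subset h fun _ _ hj => Finsupp.notMem_support_iff.1 hj).symm

lemma partialSum_le_sum (hpos : ∀ j, 0 ≤ γ j) (i : ℕ) :
    partialSum γ i ≤ γ.sum fun _ v => v := by
  obtain ⟨m, hm⟩ := Finset.exists_nat_subset_range γ.support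
  calc partialSum γ i ≤ partialSum γ (max i m) := partialSum_monotone hpos (le_max_left i m)
    _ = _ := partialSum_eq_sum (hm.trans (Finset.range_subset_range.2 (le_max_right i m)))

lemma rowIdx_eq_iff (hpos : ∀ j, 0 ≤ γ j) {k : ℕ} (hk : (k : ℤ) < γ.sum fun _ v => v)
    (i : ℕ) : rowIdx γ k = i ↔ partialSum γ i ≤ k ∧ (k : ℤ) < partialSum γ (i + 1) := by
  obtain ⟨m, hm⟩ := Finset.exists_nat_subset_range γ.support
  have hne : ∃ i, (k : ℤ) < partialSum γ (i + 1) :=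
    ⟨m, hk.trans_le ((partialSum_eq_sum hm).symm.trans_le
      (partialSum_monotone hpos m.le_succ))⟩
  change sInf {i | (k : ℤ) < partialSum γ (i + 1)} = i ↔ _
  have hfind : sInf {i | (k : ℤ) < partialSum γ (i + 1)} = i ↔
      (k : ℤ) < partialSum γ (i + 1) ∧ ∀ j < i, ¬(k : ℤ) < partialSum γ (j + 1) := by
    rw [Nat.sInf_def (s := {i | (k : ℤ) < partialSum γ (i + 1)}) hne]
    convert Nat.find_eq_iff hne
    exact Iff.rfl
  rw [hfind, and_comm]
  refine and_congr_left fun _ => ⟨fun h => ?_, fun h j hj => ?_⟩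
  · cases i with
    | zero => simp [partialSum]
    | succ i => exact not_lt.1 (h i i.lt_succ_self)
  · exact not_lt.2 ((partialSum_monotone hpos hj).trans h)

lemma card_stdTabloid (hpos : ∀ j, 0 ≤ γ j) (hsum : (γ.sum fun _ v => v) = n) (i : ℕ) :
    ((stdTabloid n γ i).card : ℤ) = γ i := by
  have hsucc : partialSum γ (i + 1) = partialSum γ i + γ i := Finset.sum_range_succ _ _
  have h0 : 0 ≤ partialSum γ i := Finset.sum_nonneg fun j _ => hpos j
  have hle := partialSum_le_sum hpos (i + 1)
  have hmap : (stdTabloid n γ i).map Fin.valEmbedding =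
      Finset.Ico (partialSum γ i).toNat (partialSum γ (i + 1)).toNat := by
    ext m
    simp only [Finset.mem_map, mem_stdTabloid, Fin.valEmbedding_apply, Finset.mem_Ico]
    constructor
    · rintro ⟨k, hk, rfl⟩
      rw [rowIdx_eq_iff hpos (by omega)] at hk
      omega
    · intro hm
      have hmn : m < n := by omega
      exact ⟨⟨m, hmn⟩, (rowIdx_eq_iff (k := m) hpos (by omega) i).2 (by omega), rfl⟩
  rw [← Finset.card_map, hmap, Nat.card_Ico]
  have := hpos i
  omega

lemma isTabloid_stdTabloid (hpos : ∀ j, 0 ≤ γ j) (hsum : (γ.sum fun _ v => v) = n) :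
    IsTabloid n γ (stdTabloid n γ) :=
  ⟨fun _ _ hij => Finset.disjoint_left.2 fun _ hi hj =>
      hij ((mem_stdTabloid.1 hi).symm.trans (mem_stdTabloid.1 hj)),
    card_stdTabloid hpos hsum⟩

end StandardTabloid

lemma xi_eq_card_fixedTabloid {n : ℕ} {γ : ℕ →₀ ℤ} (g : Equiv.Perm (Fin n))
    (hsum : (γ.sum fun _ v => v) = n) : xi n γ g = Nat.card (FixedTabloid n γ g) := by
  by_cases hpos : ∀ j, 0 ≤ γ j
  · rw [xi, if_pos ⟨hpos, hsum⟩, permCharValue, youngSubgroup_eq_stabilizer,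
      MulAction.card_fixed_quotient_stabilizer,
      (isTabloid_stdTabloid hpos hsum).orbit_eq hsum]
    rfl
  · obtain ⟨j, hj⟩ := not_forall.1 hpos
    have : IsEmpty (FixedTabloid n γ g) :=
      ⟨fun t => hj (t.2.1.2 j ▸ Int.natCast_nonneg _)⟩
    rw [xi, if_neg fun h => hpos h.1, Nat.card_of_isEmpty, Nat.cast_zero]

section Invariance

variable {n : ℕ} {γ : ℕ →₀ ℤ}

lemma xi_of_sum_ne (g : Equiv.Perm (Fin n)) (hsum : (γ.sum fun _ v => v) ≠ n) : xi n γ g = 0 :=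
  if_neg fun h => hsum h.2

lemma xi_of_neg (g : Equiv.Perm (Fin n)) {j : ℕ} (hj : γ j < 0) : xi n γ g = 0 :=
  if_neg fun h => (h.1 j).not_gt hj

lemma permCharValue_conj (H : Subgroup (Equiv.Perm (Fin n))) (g c : Equiv.Perm (Fin n)) :
    permCharValue H (c * g * c⁻¹) = permCharValue H g := by
  refine congrArg Nat.cast (Nat.card_congr
    ((MulAction.toPerm c : Equiv.Perm (_ ⧸ H)).subtypeEquiv fun q => ?_)).symm
  simp [mul_smul]

lemma xi_conj (g c : Equiv.Perm (Fin n)) : xi n γ (c * g * c⁻¹) = xi n γ g := by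
  unfold xi
  split_ifs
  exacts [permCharValue_conj _ g c, rfl]

lemma xi_eq_of_cycleType_eq {g g' : Equiv.Perm (Fin n)} (h : g.cycleType = g'.cycleType) :
    xi n γ g = xi n γ g' := by
  obtain ⟨c, rfl⟩ := isConj_iff.1 (Equiv.Perm.isConj_iff_cycleType_eq.2 h.symm)
  exact xi_conj g' c

lemma isTabloid_comp_iff (e : ℕ ≃ ℕ) {t : ℕ → Finset (Fin n)} :
    IsTabloid n γ (t ∘ e) ↔ IsTabloid n (Finsupp.equivMapDomain e γ) t := by
  refine and_congr ⟨fun h i j hij => ?_, fun h i j hij => h _ _ (e.injective.ne hij)⟩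
    ⟨fun h i => ?_, fun h i => by simpa using h (e i)⟩
  · simpa using h (e.symm i) (e.symm j) (e.symm.injective.ne hij)
  · simpa using h (e.symm i)

lemma card_fixedTabloid_equivMapDomain (e : ℕ ≃ ℕ) (g : Equiv.Perm (Fin n)) :
    Nat.card (FixedTabloid n (Finsupp.equivMapDomain e γ) g) = Nat.card (FixedTabloid n γ g) :=
  Nat.card_congr <| (e.symm.arrowCongr (Equiv.refl _)).subtypeEquiv fun t =>
    and_congr (isTabloid_comp_iff e).symm
      (e.surjective.injective_comp_right.eq_iff (a := g • t) (b := t)).symm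

lemma xi_equivMapDomain (e : ℕ ≃ ℕ) (g : Equiv.Perm (Fin n)) :
    xi n (Finsupp.equivMapDomain e γ) g = xi n γ g := by
  have hsum : ((Finsupp.equivMapDomain e γ).sum fun _ v => v) = γ.sum fun _ v => v :=
    Finsupp.sum_equivMapDomain e γ _
  by_cases hn : (γ.sum fun _ v => v) = n
  · rw [xi_eq_card_fixedTabloid g hn, xi_eq_card_fixedTabloid g (hsum.trans hn),
      card_fixedTabloid_equivMapDomain]
  · rw [xi_of_sum_ne g hn, xi_of_sum_ne g (hsum ▸ hn)]

end Invariance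

section Branching

variable {N : ℕ}

def finCastSuccEquiv (N : ℕ) : Fin N ≃ {x : Fin (N + 1) // (x : ℕ) < N} where
  toFun x := ⟨x.castSucc, x.isLt⟩
  invFun y := ⟨y.1, y.2⟩
  left_inv _ := rfl
  right_inv _ := rfl

def extendLast (τ : Equiv.Perm (Fin N)) : Equiv.Perm (Fin (N + 1)) :=
  τ.extendDomain (finCastSuccEquiv N)

@[simp]
lemma extendLast_castSucc (τ : Equiv.Perm (Fin N)) (x : Fin N) :
    extendLast τ x.castSucc = (τ x).castSucc :=
  Equiv.Perm.extendDomain_apply_image τ (finCastSuccEquiv N) x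

@[simp]
lemma extendLast_last (τ : Equiv.Perm (Fin N)) : extendLast τ (Fin.last N) = Fin.last N :=
  Equiv.Perm.extendDomain_apply_not_subtype _ _ (lt_irrefl N)

lemma extendLast_inv (τ : Equiv.Perm (Fin N)) : (extendLast τ)⁻¹ = extendLast τ⁻¹ :=
  Equiv.Perm.extendDomain_inv τ _

lemma cycleType_extendLast (τ : Equiv.Perm (Fin N)) :
    (extendLast τ).cycleType = τ.cycleType :=
  Equiv.Perm.cycleType_extendDomain _

lemma sign_extendLast (τ : Equiv.Perm (Fin N)) :
    Equiv.Perm.sign (extendLast τ) = Equiv.Perm.sign τ :=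
  Equiv.Perm.sign_extendDomain _ _

def insertLast (t' : ℕ → Finset (Fin N)) (i : ℕ) : ℕ → Finset (Fin (N + 1)) :=
  fun j => if j = i then insert (Fin.last N) ((t' j).map Fin.castSuccEmb)
    else (t' j).map Fin.castSuccEmb

noncomputable def eraseLast (t : ℕ → Finset (Fin (N + 1))) : ℕ → Finset (Fin N) :=
  fun j => (t j).preimage Fin.castSucc (Fin.castSucc_injective N).injOn

variable {t' : ℕ → Finset (Fin N)} {t : ℕ → Finset (Fin (N + 1))} {i j : ℕ}

@[simp]
lemma castSucc_mem_insertLast {x : Fin N} : x.castSucc ∈ insertLast t' i j ↔ x ∈ t' j := by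
  unfold insertLast
  split_ifs <;> simp [Fin.castSucc_ne_last]

@[simp]
lemma last_mem_insertLast : Fin.last N ∈ insertLast t' i j ↔ j = i := by
  unfold insertLast
  split_ifs <;> simp [*]

lemma card_insertLast : (insertLast t' i j).card = (t' j).card + if j = i then 1 else 0 := by
  unfold insertLast
  split_ifs
  · rw [Finset.card_insert_of_notMem (by simp), Finset.card_map]
  · rw [Finset.card_map, add_zero]

@[simp]
lemma mem_eraseLast {x : Fin N} : x ∈ eraseLast t j ↔ x.castSucc ∈ t j :=
  Finset.mem_preimage

lemma eraseLast_insertLast : eraseLast (insertLast t' i) = t' := by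
  funext j
  ext x
  simp

lemma insertLast_injective (i : ℕ) : Function.Injective fun t' : ℕ → Finset (Fin N) =>
    insertLast t' i :=
  Function.LeftInverse.injective fun _ => eraseLast_insertLast

lemma insertLast_eraseLast (h : ∀ j, Fin.last N ∈ t j ↔ j = i) :
    insertLast (eraseLast t) i = t := by
  funext j
  ext y
  induction y using Fin.lastCases with
  | last => simp [h]
  | cast x => simp

lemma extendLast_smul_insertLast (τ : Equiv.Perm (Fin N)) :
    extendLast τ • insertLast t' i = insertLast (τ • t') i := by
  funext j
  ext y
  change y ∈ extendLast τ • insertLast t' i j ↔ y ∈ insertLast (τ • t') i j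
  rw [← Finset.inv_smul_mem_iff, Equiv.Perm.smul_def, extendLast_inv]
  induction y using Fin.lastCases with
  | last => simp
  | cast x => simp [← Finset.inv_smul_mem_iff]

lemma IsTabloid.insertLast {γ : ℕ →₀ ℤ} (ht' : IsTabloid N (γ - Finsupp.single i 1) t') :
    IsTabloid (N + 1) γ (insertLast t' i) := by
  refine ⟨fun j j' hjj' => Finset.disjoint_left.2 fun y hy hy' => ?_, fun j => ?_⟩
  · induction y using Fin.lastCases with
    | last => exact hjj' ((last_mem_insertLast.1 hy).trans (last_mem_insertLast.1 hy').symm)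
    | cast x =>
      exact Finset.disjoint_left.1 (ht'.1 j j' hjj') (castSucc_mem_insertLast.1 hy)
        (castSucc_mem_insertLast.1 hy')
  · have := ht'.2 j
    rw [Finsupp.sub_apply, Finsupp.single_apply] at this
    rw [card_insertLast]
    split_ifs at this ⊢ <;> omega

lemma IsTabloid.eraseLast {γ : ℕ →₀ ℤ} (ht : IsTabloid (N + 1) γ t)
    (h : ∀ j, Fin.last N ∈ t j ↔ j = i) : IsTabloid N (γ - Finsupp.single i 1) (eraseLast t) := by
  refine ⟨fun j j' hjj' => Finset.disjoint_left.2 fun x hx hx' =>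
    Finset.disjoint_left.1 (ht.1 j j' hjj') (mem_eraseLast.1 hx) (mem_eraseLast.1 hx'), fun j => ?_⟩
  have := ht.2 j
  rw [← insertLast_eraseLast h, card_insertLast] at this
  rw [Finsupp.sub_apply, Finsupp.single_apply]
  split_ifs at this ⊢ <;> omega

noncomputable def fixedTabloidLastRowEquiv (γ : ℕ →₀ ℤ) (i : ℕ) (τ : Equiv.Perm (Fin N)) :
    {t : FixedTabloid (N + 1) γ (extendLast τ) // Fin.last N ∈ t.1 i} ≃
      FixedTabloid N (γ - Finsupp.single i 1) τ where
  toFun t :=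
    have hrow := fun j => t.1.2.1.mem_iff_eq (j := j) t.2
    ⟨eraseLast t.1.1, t.1.2.1.eraseLast hrow, insertLast_injective i <| by
      beta_reduce
      rw [← extendLast_smul_insertLast, insertLast_eraseLast hrow, t.1.2.2]⟩
  invFun t' := ⟨⟨insertLast t'.1 i, t'.2.1.insertLast, by
    rw [extendLast_smul_insertLast, t'.2.2]⟩, last_mem_insertLast.2 rfl⟩
  left_inv t := Subtype.ext <| Subtype.ext <|
    insertLast_eraseLast fun j => t.1.2.1.mem_iff_eq (j := j) t.2
  right_inv t' := Subtype.ext eraseLast_insertLast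

lemma card_fixedTabloid_extendLast {γ : ℕ →₀ ℤ} {K : ℕ} (hK : γ.support ⊆ Finset.range K)
    (hsum : (γ.sum fun _ v => v) = ((N + 1 : ℕ) : ℤ)) (τ : Equiv.Perm (Fin N)) :
    Nat.card (FixedTabloid (N + 1) γ (extendLast τ)) =
      ∑ i ∈ Finset.range K, Nat.card (FixedTabloid N (γ - Finsupp.single i 1) τ) := by
  have hrow (t : FixedTabloid (N + 1) γ (extendLast τ)) : ∃ i : Fin K, Fin.last N ∈ t.1 i := by
    obtain ⟨i, hi, h⟩ := t.2.1.exists_mem hsum (Fin.last N)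
    exact ⟨⟨i, Finset.mem_range.1 (hK hi)⟩, h⟩
  choose row hrow using hrow
  rw [← Fin.sum_univ_eq_sum_range, ← Nat.card_congr (Equiv.sigmaFiberEquiv row), Nat.card_sigma]
  refine Finset.sum_congr rfl fun i _ => Nat.card_congr <|
    (Equiv.subtypeEquivRight fun t => ?_).trans (fixedTabloidLastRowEquiv γ i τ)
  rw [(t.2.1.mem_iff_eq (hrow t)), Fin.val_eq_val, eq_comm]

lemma xi_branch {γ : ℕ →₀ ℤ} {K : ℕ} (hK : γ.support ⊆ Finset.range K)
    {s : Equiv.Perm (Fin (N + 1))} {τ : Equiv.Perm (Fin N)} (hcyc : s.cycleType = τ.cycleType) :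
    xi (N + 1) γ s = ∑ i ∈ Finset.range K, xi N (γ - Finsupp.single i 1) τ := by
  have hsum_sub (i : ℕ) :
      ((γ - Finsupp.single i 1).sum fun _ v => v) = (γ.sum fun _ v => v) - 1 := by
    rw [Finsupp.sum_sub_index fun _ _ _ => rfl, Finsupp.sum_single_index rfl]
  by_cases hsum : (γ.sum fun _ v => v) = ((N + 1 : ℕ) : ℤ)
  · have hsum' (i : ℕ) : ((γ - Finsupp.single i 1).sum fun _ v => v) = (N : ℤ) := by
      rw [hsum_sub, hsum]
      push_cast
      ring
    rw [xi_eq_of_cycleType_eq (hcyc.trans (cycleType_extendLast τ).symm),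
      xi_eq_card_fixedTabloid _ hsum, card_fixedTabloid_extendLast hK hsum, Nat.cast_sum]
    exact Finset.sum_congr rfl fun i _ => (xi_eq_card_fixedTabloid τ (hsum' i)).symm
  · rw [xi_of_sum_ne s hsum]
    refine (Finset.sum_eq_zero fun i _ => xi_of_sum_ne τ ?_).symm
    rw [hsum_sub]
    push_cast at hsum ⊢
    omega

end Branching

section Determinant

variable {n l : ℕ}

noncomputable def permShift (l : ℕ) (σ : Equiv.Perm (Fin l)) : ℕ →₀ ℤ :=
  ∑ i : Fin l, Finsupp.single (i : ℕ) (((σ i : ℕ) : ℤ) - (i : ℕ))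

lemma chi_eq_sum (δ : ℕ →₀ ℤ) (g : Equiv.Perm (Fin n)) :
    chi n l δ g = ∑ σ : Equiv.Perm (Fin l),
      (Equiv.Perm.sign σ : ℤ) * xi n (δ + permShift l σ) g := rfl

lemma permShift_apply (σ : Equiv.Perm (Fin l)) (j : ℕ) :
    permShift l σ j = if h : j < l then ((σ ⟨j, h⟩ : ℕ) : ℤ) - j else 0 := by
  rw [permShift, Finsupp.finsetSum_apply]
  split_ifs with h
  · rw [Finset.sum_eq_single ⟨j, h⟩ (fun b _ hb => Finsupp.single_eq_of_ne
      (fun hc => hb (Fin.ext hc.symm))) (by simp), Finsupp.single_eq_same]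
  · exact Finset.sum_eq_zero fun i _ => Finsupp.single_eq_of_ne fun hc => h (hc ▸ i.isLt)

lemma permShift_extendLast (τ : Equiv.Perm (Fin l)) :
    permShift (l + 1) (extendLast τ) = permShift l τ := by
  ext j
  rw [permShift_apply, permShift_apply]
  rcases lt_trichotomy j l with hj | rfl | hj
  · rw [dif_pos (hj.trans l.lt_succ_self), dif_pos hj]
    exact congrArg (fun x : Fin (l + 1) => ((x : ℕ) : ℤ) - j) (extendLast_castSucc τ ⟨j, hj⟩)
  · rw [dif_pos j.lt_succ_self, dif_neg (lt_irrefl j)]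
    change (((extendLast τ (Fin.last j) : ℕ)) : ℤ) - j = 0
    rw [extendLast_last, Fin.val_last, sub_self]
  · rw [dif_neg (by omega), dif_neg (by omega)]

lemma add_permShift_mul_swap (δ : ℕ →₀ ℤ) (σ : Equiv.Perm (Fin l)) {a b : Fin l}
    (h : δ a - a = δ b - b) :
    δ + permShift l (σ * Equiv.swap a b) =
      Finsupp.equivMapDomain (Equiv.swap (a : ℕ) b) (δ + permShift l σ) := by
  ext j
  rw [Finsupp.equivMapDomain_apply, Equiv.symm_swap, Finsupp.add_apply, Finsupp.add_apply,
    permShift_apply, permShift_apply]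
  by_cases hj : j < l
  · obtain ⟨x, rfl⟩ : ∃ x : Fin l, (x : ℕ) = j := ⟨⟨j, hj⟩, rfl⟩
    have hx : Equiv.swap (a : ℕ) b x = (Equiv.swap a b x : ℕ) := by
      simp only [Equiv.swap_apply_def, Fin.ext_iff]
      split_ifs <;> rfl
    rw [dif_pos hj, hx, dif_pos (Equiv.swap a b x).isLt, Equiv.Perm.mul_apply]
    simp only [Fin.eta]
    rcases eq_or_ne x a with rfl | hxa
    · rw [Equiv.swap_apply_left]; omega
    rcases eq_or_ne x b with rfl | hxb
    · rw [Equiv.swap_apply_right]; omega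
    · rw [Equiv.swap_apply_of_ne_of_ne hxa hxb]
  · rw [Equiv.swap_apply_of_ne_of_ne (by omega) (by omega), dif_neg hj, dif_neg hj]

lemma chi_eq_zero_of_sub_eq (δ : ℕ →₀ ℤ) (g : Equiv.Perm (Fin n)) {a b : Fin l} (hab : a ≠ b)
    (h : δ a - a = δ b - b) : chi n l δ g = 0 := by
  have hneg : chi n l δ g = -chi n l δ g := by
    rw [chi_eq_sum, ← Finset.sum_neg_distrib]
    refine Fintype.sum_equiv (Equiv.mulRight (Equiv.swap a b)) _ _ fun σ => ?_
    rw [Equiv.coe_mulRight, add_permShift_mul_swap δ σ h, xi_equivMapDomain,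
      Equiv.Perm.sign_mul, Equiv.Perm.sign_swap hab]
    push_cast
    ring
  omega

lemma exists_extendLast_eq {σ : Equiv.Perm (Fin (l + 1))} (h : σ (Fin.last l) = Fin.last l) :
    ∃ τ, extendLast τ = σ := by
  have hlast (y : Fin (l + 1)) : (y : ℕ) < l ↔ y ≠ Fin.last l := by
    rw [Ne, Fin.ext_iff, Fin.val_last]
    omega
  let ρ := σ.subtypePerm (p := fun y : Fin (l + 1) => (y : ℕ) < l) fun y => by
    rw [hlast, hlast]
    exact ⟨fun hy hy' => hy (hy' ▸ h), fun hy hy' => hy (σ.injective (hy'.trans h.symm))⟩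
  refine ⟨(finCastSuccEquiv l).symm.permCongr ρ, Equiv.ext fun y => ?_⟩
  induction y using Fin.lastCases with
  | last => rw [extendLast_last, h]
  | cast x => rw [extendLast_castSucc]; rfl

lemma extendLast_injective : Function.Injective (extendLast (N := l)) := fun τ τ' h =>
  Equiv.ext fun x => Fin.castSucc_injective l <| by
    rw [← extendLast_castSucc, ← extendLast_castSucc, h]

/-- Permutations moving the last row contribute nothing, because the last entry of
`δ + (σ - id)` is then negative. -/
lemma chi_succ_eq (δ : ℕ →₀ ℤ) (g : Equiv.Perm (Fin n)) (hδ : δ l = 0) :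
    chi n (l + 1) δ g = chi n l δ g := by
  rw [chi_eq_sum, chi_eq_sum]
  refine (Fintype.sum_of_injective extendLast extendLast_injective _ _ (fun σ hσ => ?_)
    fun τ => ?_).symm
  · have hne : σ (Fin.last l) ≠ Fin.last l := fun h => hσ (exists_extendLast_eq h)
    have hlt : (σ (Fin.last l) : ℕ) < l := Fin.val_lt_last hne
    rw [xi_of_neg g (j := l), mul_zero]
    rw [Finsupp.add_apply, permShift_apply, dif_pos l.lt_succ_self, hδ]
    change 0 + (((σ (Fin.last l) : ℕ) : ℤ) - l) < 0
    omega
  · rw [sign_extendLast, permShift_extendLast]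

lemma chi_succ_eq_zero (δ : ℕ →₀ ℤ) (g : Equiv.Perm (Fin n)) (hδ : δ l < 0) :
    chi n (l + 1) δ g = 0 := by
  rw [chi_eq_sum]
  refine Finset.sum_eq_zero fun σ _ => ?_
  rw [xi_of_neg g (j := l), mul_zero]
  rw [Finsupp.add_apply, permShift_apply, dif_pos l.lt_succ_self]
  have := (σ ⟨l, l.lt_succ_self⟩).isLt
  omega

lemma permShift_support_subset {l : ℕ} (σ : Equiv.Perm (Fin l)) :
    (permShift l σ).support ⊆ Finset.range l := fun j hj =>
  Finset.mem_range.2 <| by_contra fun h =>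
    Finsupp.mem_support_iff.1 hj (by rw [permShift_apply, dif_neg h])

lemma chi_branch {N l K : ℕ} {δ : ℕ →₀ ℤ} (hδ : δ.support ⊆ Finset.range K) (hl : l ≤ K)
    {s : Equiv.Perm (Fin (N + 1))} {τ : Equiv.Perm (Fin N)} (hcyc : s.cycleType = τ.cycleType) :
    chi (N + 1) l δ s = ∑ i ∈ Finset.range K, chi N l (δ - Finsupp.single i 1) τ := by
  have hsupp (σ : Equiv.Perm (Fin l)) : (δ + permShift l σ).support ⊆ Finset.range K :=
    Finsupp.support_add.trans (Finset.union_subset hδ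
      ((permShift_support_subset σ).trans (Finset.range_subset_range.2 hl)))
  simp_rw [chi_eq_sum, xi_branch (hsupp _) hcyc, Finset.mul_sum, sub_add_eq_add_sub]
  exact Finset.sum_comm

end Determinant

lemma HasCycleType.cycleType_eq {N M : ℕ} {β : ℕ →₀ ℕ} {s : Equiv.Perm (Fin (N + 1))}
    {τ : Equiv.Perm (Fin N)} (hs : HasCycleType s β)
    (hτ : HasCycleType τ (β - Finsupp.single M 1)) (hM : β M = 1) :
    s.cycleType = τ.cycleType := by
  have hβ' (j : ℕ) : (β - Finsupp.single M 1 : ℕ →₀ ℕ) j = if j = M then 0 else β j := by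
    rw [Finsupp.tsub_apply, Finsupp.single_apply]
    split_ifs <;> subst_vars <;> simp_all
  have hlarge : β.support.filter (fun j => 2 ≤ β j) =
      (β - Finsupp.single M 1).support.filter
        (fun j => 2 ≤ (β - Finsupp.single M 1 : ℕ →₀ ℕ) j) := by
    ext j
    simp only [Finset.mem_filter, Finsupp.mem_support_iff, hβ']
    split_ifs with hj <;> simp_all
  rw [hs.2, hτ.2, partsOf, partsOf, Multiset.filter_map, Multiset.filter_map]
  rw [← Finset.filter_val, ← Finset.filter_val]
  simp only [Function.comp_def]
  rw [← hlarge]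
  refine Multiset.map_congr rfl fun j hj => ?_
  have hj : 2 ≤ β j := (Finset.mem_filter.1 hj).2
  rw [hβ', if_neg (by rintro rfl; omega)]

lemma natToZ_apply (α : ℕ →₀ ℕ) (j : ℕ) : natToZ α j = α j := rfl

namespace IsPartitionOf

variable {α : ℕ →₀ ℕ} {n : ℕ}

lemma apply_eq_zero (hα : IsPartitionOf α n) {j : ℕ} (hj : n ≤ j) : α j = 0 := by
  by_contra h
  have hpos (a : ℕ) (ha : a ∈ Finset.range (j + 1)) : 1 ≤ α a :=
    (Nat.one_le_iff_ne_zero.2 h).trans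
      (antitone_nat_of_succ_le hα.1 (Nat.lt_succ_iff.1 (Finset.mem_range.1 ha)))
  have : j + 1 ≤ n := calc
    j + 1 = ∑ _a ∈ Finset.range (j + 1), 1 := by simp
    _ ≤ ∑ a ∈ Finset.range (j + 1), α a := Finset.sum_le_sum hpos
    _ ≤ ∑ a ∈ α.support, α a :=
      Finset.sum_le_sum_of_ne_zero fun _ _ hx => Finsupp.mem_support_iff.2 hx
    _ = n := hα.2
  omega

lemma sub_single (hα : IsPartitionOf α (n + 1)) {i : ℕ} (hi : α (i + 1) < α i) :
    IsPartitionOf (α - Finsupp.single i 1) n := by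
  refine ⟨fun j => ?_, ?_⟩
  · have := hα.1 j
    simp only [Finsupp.tsub_apply, Finsupp.single_apply]
    split_ifs <;> subst_vars <;> omega
  · have hle : Finsupp.single i 1 ≤ α := Finsupp.single_le_iff.2 (by omega)
    have hsum := hα.2
    rw [← tsub_add_cancel_of_le hle, Finsupp.sum_add_index' (fun _ => rfl) fun _ _ _ => rfl,
      Finsupp.sum_single_index rfl] at hsum
    omega

lemma support_natToZ_subset (hα : IsPartitionOf α n) : (natToZ α).support ⊆ Finset.range n :=
  fun j hj => Finset.mem_range.2 <| by_contra fun h => Finsupp.mem_support_iff.1 hj <| by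
    rw [natToZ_apply, hα.apply_eq_zero (not_lt.1 h), Nat.cast_zero]

end IsPartitionOf

lemma natToZ_sub_single {α : ℕ →₀ ℕ} {i : ℕ} (h : 1 ≤ α i) :
    natToZ (α - Finsupp.single i 1) = natToZ α - Finsupp.single i 1 := by
  ext j
  rw [Finsupp.sub_apply, natToZ_apply, natToZ_apply, Finsupp.tsub_apply, Finsupp.single_apply,
    Finsupp.single_apply]
  split_ifs with hij
  · subst hij
    push_cast [h]
    ring
  · simp

lemma chi_natToZ_sub_single {N : ℕ} {α : ℕ →₀ ℕ} (hα : IsPartitionOf α (N + 1)) {i : ℕ}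
    (hi : i < N + 1) (τ : Equiv.Perm (Fin N)) :
    chi N (N + 1) (natToZ α - Finsupp.single i 1) τ =
      if α (i + 1) < α i then zeta N (α - Finsupp.single i 1) τ else 0 := by
  split_ifs with hdesc
  · have h1 : 1 ≤ α i := by omega
    rw [← natToZ_sub_single h1, chi_succ_eq _ _ (by
      rw [natToZ_apply, (hα.sub_single hdesc).apply_eq_zero le_rfl, Nat.cast_zero]), zeta]
  · have heq : α (i + 1) = α i := le_antisymm (hα.1 i) (not_lt.1 hdesc)
    rcases Nat.lt_succ_iff_lt_or_eq.1 hi with hi | rfl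
    · refine chi_eq_zero_of_sub_eq _ _ (a := ⟨i, by omega⟩) (b := ⟨i + 1, by omega⟩)
        (by simp [Fin.ext_iff]) ?_
      simp only [Finsupp.sub_apply, natToZ_apply, Finsupp.single_apply, heq, ↓reduceIte,
        Nat.left_eq_add, one_ne_zero, sub_zero, Nat.cast_add, Nat.cast_one]
      ring
    · refine chi_succ_eq_zero _ _ ?_
      rw [Finsupp.sub_apply, natToZ_apply, Finsupp.single_eq_same, ← heq,
        hα.apply_eq_zero le_rfl]
      norm_num

theorem stmt10_general (N M L : ℕ) (α β : ℕ →₀ ℕ)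
    (hα : IsPartitionOf α (N + 1)) (hL : ∀ i, L ≤ i → α i = 0)
    (hMone : β M = 1)
    (s : Equiv.Perm (Fin (N + 1))) (hs : HasCycleType s β)
    (τ : Equiv.Perm (Fin N)) (hτ : HasCycleType τ (β - Finsupp.single M 1)) :
    zeta (N + 1) α s =
      ∑ i ∈ Finset.range L,
        (if α (i + 1) < α i then zeta N (α - Finsupp.single i 1) τ else 0) := by
  have hvanish (b : ℕ) (hb : ∀ i, b ≤ i → α i = 0) (i : ℕ) (hi : b ≤ i) :
      (if α (i + 1) < α i then zeta N (α - Finsupp.single i 1) τ else 0) = 0 :=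
    if_neg (by rw [hb i hi]; exact Nat.not_lt_zero _)
  rw [zeta, chi_branch hα.support_natToZ_subset le_rfl (hs.cycleType_eq hτ hMone),
    Finset.sum_congr rfl fun i hi => chi_natToZ_sub_single hα (Finset.mem_range.1 hi) τ]
  exact Finset.sum_range_eq_of_eq_zero (hvanish _ fun _ => hα.apply_eq_zero) (hvanish L hL)

/-- The branching theorem: if the last part of `β` is `1` (at position `M`, `0`-indexed),
then `ζ^α_β = ∑_{i : α_i > α_{i+1}} ζ^{α-ε_i}_{β-ε_m}`. -/
theorem stmt10 (N M L : ℕ) (α β : ℕ →₀ ℕ)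
    (hα : IsPartitionOf α (N + 1)) (hL : ∀ i, L ≤ i → α i = 0)
    (hβ : IsPartitionOf β (N + 1))
    (hM : ∀ j, M + 1 ≤ j → β j = 0) (hMone : β M = 1)
    (s : Equiv.Perm (Fin (N + 1))) (hs : HasCycleType s β)
    (τ : Equiv.Perm (Fin N)) (hτ : HasCycleType τ (β - Finsupp.single M 1)) :
    zeta (N + 1) α s =
      ∑ i ∈ Finset.range L,
        (if α (i + 1) < α i then zeta N (α - Finsupp.single i 1) τ else 0) :=
  stmt10_general N M L α β hα hL hMone s hs τ hτ
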